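/- arXiv:1905.11128 — 2 statements merged into one kernel-verified Lean document; each statement's English description precedes it below -/
import Mathlib

section
/- Bernstein-type martingale concentration with random stopping: let (Z_t)_{t≥1} be a martingale difference sequence adapted to a filtration (F_t) with |Z_t| ≤ b almost surely and E[Z_t² | F_{t−1}] ≤ v for all t, for constants b, v > 0. Let N be an F-measurable integer-valued random variable with 1 ≤ N ≤ n almost surely. Then for every c ∈ (1, n] and δ ∈ (0,1), with probability at least 1 − δ, (1/N) Σ_{t=1}^{N} Z_t < √(2ζv/N) + ζb/(3N), where ζ = c·log(⌈log n / log c⌉ / δ). -/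
open MeasureTheory
open Finset
open scoped ENNReal NNReal



lemma factorial_ge_aux (k : ℕ) : 2 * 3 ^ k ≤ Nat.factorial (k + 2) := by
  induction k with
  | zero => simp [Nat.factorial]
  | succ k ih =>
    have h : Nat.factorial (k + 1 + 2) = (k + 3) * Nat.factorial (k + 2) := by
      rw [show k + 1 + 2 = (k + 2) + 1 from rfl, Nat.factorial_succ]
    rw [h, pow_succ]
    calc 2 * (3 ^ k * 3) = 3 * (2 * 3 ^ k) := by ring
    _ ≤ 3 * Nat.factorial (k + 2) := by exact Nat.mul_le_mul_left 3 ih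
    _ ≤ (k + 3) * Nat.factorial (k + 2) := Nat.mul_le_mul_right _ (by omega)

lemma exp_expansion (x : ℝ) : Real.exp x - 1 - x = ∑' k : ℕ, x ^ (k + 2) / Nat.factorial (k + 2) := by
  have hs := Real.summable_pow_div_factorial x
  have h1 : Summable fun k : ℕ => x ^ (k + 1) / Nat.factorial (k + 1) :=
    (summable_nat_add_iff 1).2 hs
  have hexp : Real.exp x = ∑' k : ℕ, x ^ k / Nat.factorial k := by
    rw [Real.exp_eq_exp_ℝ, NormedSpace.exp_eq_tsum_div]
  rw [hexp, Summable.tsum_eq_zero_add hs, Summable.tsum_eq_zero_add h1]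
  simp [Nat.factorial]

lemma exp_quad_bound {u : ℝ} (hu0 : 0 ≤ u) (hu3 : u < 3) :
    Real.exp u - 1 - u ≤ u ^ 2 / (2 * (1 - u / 3)) := by
  rw [exp_expansion]
  have hsum1 : Summable fun k : ℕ => u ^ (k + 2) / Nat.factorial (k + 2) :=
    (summable_nat_add_iff 2).2 (Real.summable_pow_div_factorial u)
  have hu31 : u / 3 < 1 := by linarith
  have hu30 : 0 ≤ u / 3 := by linarith
  have hgeo : Summable fun k : ℕ => (u / 3) ^ k := summable_geometric_of_lt_one hu30 hu31
  have hsum2 : Summable fun k : ℕ => u ^ 2 / 2 * (u / 3) ^ k := hgeo.mul_left _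
  have hterm : ∀ k : ℕ, u ^ (k + 2) / Nat.factorial (k + 2) ≤ u ^ 2 / 2 * (u / 3) ^ k := by
    intro k
    have hfac : (2 * 3 ^ k : ℝ) ≤ Nat.factorial (k + 2) := by
      exact_mod_cast factorial_ge_aux k
    have hfp : (0:ℝ) < 2 * 3 ^ k := by positivity
    have h1 : u ^ (k + 2) / Nat.factorial (k + 2) ≤ u ^ (k + 2) / (2 * 3 ^ k) := by
      apply div_le_div_of_nonneg_left (by positivity) hfp hfac
    refine h1.trans (le_of_eq ?_)
    rw [div_pow]
    field_simp
    ring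
  calc (∑' k : ℕ, u ^ (k + 2) / Nat.factorial (k + 2))
      ≤ ∑' k : ℕ, u ^ 2 / 2 * (u / 3) ^ k := Summable.tsum_le_tsum hterm hsum1 hsum2
    _ = u ^ 2 / 2 * (1 - u / 3)⁻¹ := by
        rw [tsum_mul_left, tsum_geometric_of_lt_one hu30 hu31]
    _ = u ^ 2 / (2 * (1 - u / 3)) := by
        rw [div_mul_eq_mul_div, mul_comm]
        field_simp

lemma exp_le_quad {l b z : ℝ} (hl : 0 ≤ l) (hb : 0 < b) (hz : |z| ≤ b) :
    Real.exp (l * z) ≤ 1 + l * z + z ^ 2 * ((Real.exp (l * b) - 1 - l * b) / b ^ 2) := by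
  have key : Real.exp (l * z) - 1 - l * z
      ≤ z ^ 2 / b ^ 2 * (Real.exp (l * b) - 1 - l * b) := by
    rw [exp_expansion, exp_expansion, ← tsum_mul_left]
    refine Summable.tsum_le_tsum ?_ ((summable_nat_add_iff 2).2 (Real.summable_pow_div_factorial _))
      (((summable_nat_add_iff 2).2 (Real.summable_pow_div_factorial _)).mul_left _)
    intro k
    have hfp : (0:ℝ) < (Nat.factorial (k + 2) : ℝ) := by
      exact_mod_cast Nat.factorial_pos _
    rw [mul_div_assoc']
    apply div_le_div_of_nonneg_right ?_ hfp.le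
    · -- (l*z)^(k+2) ≤ z^2/b^2 * (l*b)^(k+2)
      have h1 : (l * z) ^ (k + 2) ≤ |l * z| ^ (k + 2) := by
        rw [← abs_pow]; exact le_abs_self _
      have h2 : |l * z| ^ (k + 2) = l ^ (k + 2) * (|z| ^ k * z ^ 2) := by
        rw [abs_mul, abs_of_nonneg hl, mul_pow]
        congr 1
        rw [show k + 2 = k + 2 from rfl, pow_add, sq_abs]
      have h3 : |z| ^ k ≤ b ^ k := pow_le_pow_left₀ (abs_nonneg _) hz k
      have h4 : l ^ (k + 2) * (|z| ^ k * z ^ 2) ≤ l ^ (k + 2) * (b ^ k * z ^ 2) := by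
        apply mul_le_mul_of_nonneg_left ?_ (by positivity)
        exact mul_le_mul_of_nonneg_right h3 (sq_nonneg _)
      have h5 : l ^ (k + 2) * (b ^ k * z ^ 2) = z ^ 2 / b ^ 2 * (l * b) ^ (k + 2) := by
        field_simp
        ring
      linarith
  have heq : z ^ 2 * ((Real.exp (l * b) - 1 - l * b) / b ^ 2)
      = z ^ 2 / b ^ 2 * (Real.exp (l * b) - 1 - l * b) := by ring
  linarith
lemma condexp_exp_le {Ω : Type*} {m0 : MeasurableSpace Ω} (μ : Measure Ω)
    [IsProbabilityMeasure μ] (ℱ : Filtration ℕ m0) (W : Ω → ℝ) (b v l G : ℝ)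
    (hb : 0 < b) (hv : 0 < v) (hl : 0 ≤ l) (k : ℕ)
    (hWm : StronglyMeasurable[ℱ (k+1)] W)
    (hWb : ∀ᵐ ω ∂μ, |W ω| ≤ b)
    (hWmds : μ[W | ℱ k] =ᵐ[μ] 0)
    (hWvar : ∀ᵐ ω ∂μ, (μ[fun ω' => W ω' ^ 2 | ℱ k]) ω ≤ v)
    (hG : G = (Real.exp (l * b) - 1 - l * b) / b ^ 2) :
    ((fun _ => (1:ℝ)) ≤ᵐ[μ] μ[fun ω => Real.exp (l * W ω) | ℱ k])
    ∧ (μ[fun ω => Real.exp (l * W ω) | ℱ k] ≤ᵐ[μ] fun _ => Real.exp (v * G)) := by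
  have hWm0 : StronglyMeasurable[m0] W := hWm.mono (ℱ.le _)
  have hG0 : 0 ≤ G := by
    rw [hG]
    have h := Real.add_one_le_exp (l * b)
    apply div_nonneg (by linarith) (by positivity)
  have hWint : Integrable W μ :=
    ⟨hWm0.aestronglyMeasurable, HasFiniteIntegral.of_bounded (C := b)
      (by filter_upwards [hWb] with ω h; rwa [Real.norm_eq_abs])⟩
  have hW2int : Integrable (fun ω => W ω ^ 2) μ :=
    ⟨(hWm0.pow 2).aestronglyMeasurable, HasFiniteIntegral.of_bounded (C := b ^ 2)
      (by filter_upwards [hWb] with ω h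
          rw [Real.norm_eq_abs, abs_pow]
          exact pow_le_pow_left₀ (abs_nonneg _) h 2)⟩
  have hE1int : Integrable (fun ω => Real.exp (l * W ω)) μ :=
    ⟨(Real.continuous_exp.comp_stronglyMeasurable (hWm0.const_mul l)).aestronglyMeasurable,
      HasFiniteIntegral.of_bounded (C := Real.exp (l * b))
      (by filter_upwards [hWb] with ω h
          rw [Real.norm_eq_abs, Real.abs_exp]
          exact Real.exp_le_exp.2 (mul_le_mul_of_nonneg_left ((le_abs_self _).trans h) hl))⟩
  have hlinint : Integrable (fun ω => 1 + l * W ω) μ :=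
    (integrable_const 1).add (hWint.const_mul l)
  have hconst : μ[fun _ : Ω => (1:ℝ) | ℱ k] = fun _ => (1:ℝ) := condExp_const (ℱ.le k) 1
  have hcond_lin : μ[fun ω => 1 + l * W ω | ℱ k] =ᵐ[μ] fun _ => (1:ℝ) := by
    have h1 : μ[(fun _ : Ω => (1:ℝ)) + l • W | ℱ k]
        =ᵐ[μ] μ[fun _ : Ω => (1:ℝ) | ℱ k] + μ[l • W | ℱ k] :=
      condExp_add (integrable_const 1) (hWint.smul l) (ℱ k)
    have h2 := condExp_smul (μ := μ) (m := ℱ k) l W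
    have h1' : μ[fun ω => 1 + l * W ω | ℱ k]
        =ᵐ[μ] μ[fun _ : Ω => (1:ℝ) | ℱ k] + μ[l • W | ℱ k] := h1
    refine h1'.trans ?_
    filter_upwards [h2, hWmds] with ω e2 e3
    have e2' : (μ[l • W | ℱ k]) ω = l * (μ[W | ℱ k]) ω := e2
    have e3' : (μ[W | ℱ k]) ω = 0 := e3
    show (μ[fun _ : Ω => (1:ℝ) | ℱ k]) ω + (μ[l • W | ℱ k]) ω = 1
    rw [hconst, e2', e3']
    ring
  constructor
  · -- lower bound
    have hmono := condExp_mono (μ := μ) (m := ℱ k) hlinint hE1int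
      (Filter.Eventually.of_forall fun ω => by
        have h := Real.add_one_le_exp (l * W ω)
        show 1 + l * W ω ≤ Real.exp (l * W ω)
        linarith)
    filter_upwards [hmono, hcond_lin] with ω h1 h2
    show (1:ℝ) ≤ (μ[fun ω => Real.exp (l * W ω) | ℱ k]) ω
    have h2' : (μ[fun ω => 1 + l * W ω | ℱ k]) ω = 1 := h2
    linarith [h1, h2'.symm.le, h2'.le]
  · -- upper bound
    have hquadint : Integrable (fun ω => (1 + l * W ω) + G * W ω ^ 2) μ :=
      hlinint.add (hW2int.const_mul G)
    have hquad : (fun ω => Real.exp (l * W ω)) ≤ᵐ[μ] fun ω => (1 + l * W ω) + G * W ω ^ 2 := by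
      filter_upwards [hWb] with ω h
      have h5 := exp_le_quad hl hb h
      show Real.exp (l * W ω) ≤ (1 + l * W ω) + G * W ω ^ 2
      rw [hG]; nlinarith [h5]
    have hmono := condExp_mono (μ := μ) (m := ℱ k) hE1int hquadint hquad
    have h1 : μ[(fun ω => 1 + l * W ω) + G • (fun ω => W ω ^ 2) | ℱ k]
        =ᵐ[μ] μ[fun ω => 1 + l * W ω | ℱ k] + μ[G • (fun ω => W ω ^ 2) | ℱ k] :=
      condExp_add hlinint (hW2int.smul G) (ℱ k)
    have h1' : μ[fun ω => (1 + l * W ω) + G * W ω ^ 2 | ℱ k]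
        =ᵐ[μ] μ[fun ω => 1 + l * W ω | ℱ k] + μ[G • (fun ω => W ω ^ 2) | ℱ k] := h1
    have h2 := condExp_smul (μ := μ) (m := ℱ k) G (fun ω => W ω ^ 2)
    filter_upwards [hmono, h1', h2, hcond_lin, hWvar] with ω hm e1 e2 e3 e4
    have e1' : (μ[fun ω => (1 + l * W ω) + G * W ω ^ 2 | ℱ k]) ω
        = (μ[fun ω => 1 + l * W ω | ℱ k]) ω + (μ[G • (fun ω => W ω ^ 2) | ℱ k]) ω := e1
    have e2' : (μ[G • (fun ω => W ω ^ 2) | ℱ k]) ω = G * (μ[fun ω' => W ω' ^ 2 | ℱ k]) ω := e2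
    have e3' : (μ[fun ω => 1 + l * W ω | ℱ k]) ω = 1 := e3
    show (μ[fun ω => Real.exp (l * W ω) | ℱ k]) ω ≤ Real.exp (v * G)
    have hGv : G * (μ[fun ω' => W ω' ^ 2 | ℱ k]) ω ≤ G * v := mul_le_mul_of_nonneg_left e4 hG0
    have hex : 1 + G * v ≤ Real.exp (v * G) := by
      have := Real.add_one_le_exp (v * G); nlinarith
    calc (μ[fun ω => Real.exp (l * W ω) | ℱ k]) ω
        ≤ (μ[fun ω => (1 + l * W ω) + G * W ω ^ 2 | ℱ k]) ω := hm
      _ = 1 + G * (μ[fun ω' => W ω' ^ 2 | ℱ k]) ω := by rw [e1', e2', e3']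
      _ ≤ 1 + G * v := by linarith
      _ ≤ Real.exp (v * G) := hex
lemma bernstein_block {Ω : Type*} {m0 : MeasurableSpace Ω} (μ : Measure Ω)
    [IsProbabilityMeasure μ] (ℱ : Filtration ℕ m0)
    (Z : ℕ → Ω → ℝ) (b v : ℝ) (hb : 0 < b) (hv : 0 < v)
    (hadapt : ∀ t, 1 ≤ t → StronglyMeasurable[ℱ t] (Z t))
    (hmds : ∀ t, 1 ≤ t → μ[Z t | ℱ (t - 1)] =ᵐ[μ] 0)
    (hbdd : ∀ t, 1 ≤ t → ∀ᵐ ω ∂μ, |Z t ω| ≤ b)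
    (hvar : ∀ t, 1 ≤ t → ∀ᵐ ω ∂μ, (μ[fun ω' => (Z t ω') ^ 2 | ℱ (t - 1)]) ω ≤ v)
    (T : ℕ) (hT : 1 ≤ T) (x : ℝ) (hx : 0 < x) :
    μ {ω | ∃ m ≤ T, Real.sqrt (2 * x * v * T) + x * b / 3 ≤ ∑ t ∈ Finset.Icc 1 m, Z t ω}
      ≤ ENNReal.ofReal (Real.exp (-x)) := by
  classical
  have hT0 : (0:ℝ) < (T:ℝ) := by exact_mod_cast hT
  set S : ℕ → Ω → ℝ := fun k ω => ∑ t ∈ Finset.Icc 1 k, Z t ω with hSdef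
  set s : ℝ := Real.sqrt (2 * x / (v * T)) with hsdef
  have hs0 : 0 < s := Real.sqrt_pos.2 (by positivity)
  have hs2 : s ^ 2 = 2 * x / (v * T) := Real.sq_sqrt (by positivity)
  set p : ℝ := 1 + b * s / 3 with hpdef
  have hp0 : (0:ℝ) < p := by positivity
  have hp1 : (1:ℝ) ≤ p := by rw [hpdef]; nlinarith
  set l : ℝ := s / p with hldef
  have hl0 : 0 < l := div_pos hs0 hp0
  have hlb3 : l * b < 3 := by
    rw [hldef, div_mul_eq_mul_div, div_lt_iff₀ hp0, hpdef]
    nlinarith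
  set G : ℝ := (Real.exp (l * b) - 1 - l * b) / b ^ 2 with hGdef
  -- the exponential process
  set f : ℕ → Ω → ℝ := fun k ω => Real.exp (l * S k ω) with hfdef
  have hSmeas : ∀ k, StronglyMeasurable[ℱ k] (S k) := by
    intro k
    apply Finset.stronglyMeasurable_fun_sum
    intro t ht
    rw [Finset.mem_Icc] at ht
    exact (hadapt t ht.1).mono (ℱ.mono ht.2)
  have hfmeas : ∀ k, StronglyMeasurable[ℱ k] (f k) :=
    fun k => Real.continuous_exp.comp_stronglyMeasurable ((hSmeas k).const_mul l)
  have hZball : ∀ᵐ ω ∂μ, ∀ t, 1 ≤ t → |Z t ω| ≤ b := by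
    rw [ae_all_iff]
    intro t
    by_cases ht : 1 ≤ t
    · filter_upwards [hbdd t ht] with ω h _
      exact h
    · filter_upwards with ω h
      exact absurd h ht
  have hSbound : ∀ k, ∀ᵐ ω ∂μ, |S k ω| ≤ k * b := by
    intro k
    filter_upwards [hZball] with ω hω
    calc |S k ω| ≤ ∑ t ∈ Finset.Icc 1 k, |Z t ω| := Finset.abs_sum_le_sum_abs _ _
      _ ≤ ∑ t ∈ Finset.Icc 1 k, b :=
          Finset.sum_le_sum (fun t ht => hω t (Finset.mem_Icc.1 ht).1)
      _ ≤ k * b := by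
          rw [Finset.sum_const, Nat.card_Icc]
          simp [nsmul_eq_mul]
  have hfint : ∀ k, Integrable (f k) μ := by
    intro k
    refine ⟨((hfmeas k).mono (ℱ.le k)).aestronglyMeasurable,
      HasFiniteIntegral.of_bounded (C := Real.exp (l * (k * b))) ?_⟩
    filter_upwards [hSbound k] with ω hω
    rw [Real.norm_eq_abs, Real.abs_exp]
    exact Real.exp_le_exp.2 (mul_le_mul_of_nonneg_left ((le_abs_self _).trans hω) hl0.le)
  -- one-step bounds
  have keystep : ∀ k : ℕ, (f k ≤ᵐ[μ] μ[f (k+1) | ℱ k]) ∧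
      (μ[f (k+1) | ℱ k] ≤ᵐ[μ] fun ω => f k ω * Real.exp (v * G)) := by
    intro k
    have hk1 : 1 ≤ k + 1 := Nat.succ_le_succ (Nat.zero_le k)
    have hWmds : μ[Z (k+1) | ℱ k] =ᵐ[μ] 0 := by simpa using hmds (k+1) hk1
    have hWvar : ∀ᵐ ω ∂μ, (μ[fun ω' => Z (k+1) ω' ^ 2 | ℱ k]) ω ≤ v := by
      simpa using hvar (k+1) hk1
    obtain ⟨hlow, hup⟩ := condexp_exp_le μ ℱ (Z (k+1)) b v l G hb hv hl0.le k
      (hadapt (k+1) hk1) (hbdd (k+1) hk1) hWmds hWvar hGdef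
    have hE1int : Integrable (fun ω => Real.exp (l * Z (k+1) ω)) μ :=
      ⟨(Real.continuous_exp.comp_stronglyMeasurable
          (((hadapt (k+1) hk1).mono (ℱ.le _)).const_mul l)).aestronglyMeasurable,
        HasFiniteIntegral.of_bounded (C := Real.exp (l * b))
        (by filter_upwards [hbdd (k+1) hk1] with ω h
            rw [Real.norm_eq_abs, Real.abs_exp]
            exact Real.exp_le_exp.2
              (mul_le_mul_of_nonneg_left ((le_abs_self _).trans h) hl0.le))⟩
    have hsplit : f (k+1) = fun ω => f k ω * Real.exp (l * Z (k+1) ω) := by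
      funext ω
      show Real.exp (l * S (k+1) ω) = Real.exp (l * S k ω) * Real.exp (l * Z (k+1) ω)
      rw [← Real.exp_add]
      congr 1
      have hstep : S (k+1) ω = S k ω + Z (k+1) ω := Finset.sum_Icc_succ_top hk1 _
      rw [hstep]; ring
    have hmulint : Integrable (f k * fun ω => Real.exp (l * Z (k+1) ω)) μ := by
      have : (f k * fun ω => Real.exp (l * Z (k+1) ω)) = f (k+1) := hsplit.symm
      rw [this]
      exact hfint (k+1)
    have hpull : μ[f (k+1) | ℱ k]
        =ᵐ[μ] fun ω => f k ω * (μ[fun ω' => Real.exp (l * Z (k+1) ω') | ℱ k]) ω := by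
      rw [hsplit]
      exact condExp_mul_of_stronglyMeasurable_left (hfmeas k) hmulint hE1int
    constructor
    · filter_upwards [hpull, hlow] with ω h1 h2
      have h2' : (1:ℝ) ≤ (μ[fun ω' => Real.exp (l * Z (k+1) ω') | ℱ k]) ω := h2
      rw [h1]
      have hfk0 : 0 < f k ω := Real.exp_pos _
      nlinarith
    · filter_upwards [hpull, hup] with ω h1 h2
      have h2' : (μ[fun ω' => Real.exp (l * Z (k+1) ω') | ℱ k]) ω ≤ Real.exp (v * G) := h2
      rw [h1]
      have hfk0 : 0 < f k ω := Real.exp_pos _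
      exact mul_le_mul_of_nonneg_left h2' hfk0.le
  have hadp : StronglyAdapted ℱ f := fun k => hfmeas k
  have hsub : Submartingale f ℱ μ := submartingale_nat hadp hfint (fun i => (keystep i).1)
  -- expectation bound
  have hExp : ∀ k : ℕ, ∫ ω, f k ω ∂μ ≤ Real.exp (k * (v * G)) := by
    intro k
    induction k with
    | zero =>
        have : f 0 = fun _ => (1:ℝ) := by
          funext ω
          show Real.exp (l * S 0 ω) = 1
          have : S 0 ω = 0 := by simp [hSdef]
          rw [this, mul_zero, Real.exp_zero]
        rw [this]
        simp
    | succ k ih =>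
        have h1 : ∫ ω, f (k+1) ω ∂μ = ∫ ω, (μ[f (k+1) | ℱ k]) ω ∂μ :=
          (integral_condExp (ℱ.le k)).symm
        rw [h1]
        have h2 : ∫ ω, (μ[f (k+1) | ℱ k]) ω ∂μ ≤ ∫ ω, f k ω * Real.exp (v * G) ∂μ :=
          integral_mono_ae integrable_condExp ((hfint k).mul_const _) (keystep k).2
        have h3 : ∫ ω, f k ω * Real.exp (v * G) ∂μ = (∫ ω, f k ω ∂μ) * Real.exp (v * G) :=
          integral_mul_const _ _
        have h4 : (∫ ω, f k ω ∂μ) * Real.exp (v * G) ≤ Real.exp (k * (v * G)) * Real.exp (v * G) :=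
          mul_le_mul_of_nonneg_right ih (Real.exp_pos _).le
        calc ∫ ω, (μ[f (k+1) | ℱ k]) ω ∂μ ≤ _ := h2
          _ = (∫ ω, f k ω ∂μ) * Real.exp (v * G) := h3
          _ ≤ Real.exp (k * (v * G)) * Real.exp (v * G) := h4
          _ = Real.exp ((k + 1 : ℕ) * (v * G)) := by
              rw [← Real.exp_add]
              congr 1
              push_cast
              ring
  -- Doob's maximal inequality
  set A : ℝ := Real.sqrt (2 * x * v * T) + x * b / 3 with hAdef
  have hA0 : 0 < A := by
    have := Real.sqrt_nonneg (2 * x * v * T)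
    have : 0 < x * b / 3 := by positivity
    rw [hAdef]; positivity
  set ε : NNReal := (Real.exp (l * A)).toNNReal with hεdef
  have hεr : (ε : ℝ) = Real.exp (l * A) := Real.coe_toNNReal _ (Real.exp_pos _).le
  have hnonneg : (0 : ℕ → Ω → ℝ) ≤ f := by
    intro k
    intro ω
    exact (Real.exp_pos _).le
  have hDoob := maximal_ineq hsub hnonneg (ε := ε) T
  set D : Set Ω := {ω | (ε : ℝ) ≤ (Finset.range (T + 1)).sup'
      Finset.nonempty_range_add_one fun k => f k ω} with hDdef
  have hsubset : {ω | ∃ m ≤ T, A ≤ S m ω} ⊆ D := by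
    rintro ω ⟨m, hm, hAm⟩
    have hmem : m ∈ Finset.range (T + 1) := Finset.mem_range.2 (Nat.lt_succ_of_le hm)
    have h1 : (ε : ℝ) ≤ f m ω := by
      rw [hεr]
      exact Real.exp_le_exp.2 (mul_le_mul_of_nonneg_left hAm hl0.le)
    exact le_trans h1 (Finset.le_sup' (fun k => f k ω) hmem)
  -- combine
  have hIB : ENNReal.ofReal (∫ ω in D, f T ω ∂μ) ≤ ENNReal.ofReal (Real.exp (T * (v * G))) :=
    ENNReal.ofReal_le_ofReal
      ((setIntegral_le_integral (hfint T)
        (Filter.Eventually.of_forall fun ω => (Real.exp_pos _).le)).trans (hExp T))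
  have hεpos : (0:ℝ≥0∞) < (ε : ℝ≥0∞) := by
    rw [ENNReal.coe_pos]
    exact Real.toNNReal_pos.2 (Real.exp_pos _)
  have hεtop : (ε : ℝ≥0∞) ≠ ⊤ := ENNReal.coe_ne_top
  have hμD : μ D ≤ ENNReal.ofReal (Real.exp (T * (v * G))) / (ε : ℝ≥0∞) := by
    rw [ENNReal.le_div_iff_mul_le (Or.inl hεpos.ne') (Or.inl hεtop)]
    rw [mul_comm]
    calc (ε : ℝ≥0∞) * μ D = ε • μ D := rfl
      _ ≤ ENNReal.ofReal (∫ ω in D, f T ω ∂μ) := hDoob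
      _ ≤ _ := hIB
  have hεofReal : (ε : ℝ≥0∞) = ENNReal.ofReal (Real.exp (l * A)) := rfl
  have hdiv : ENNReal.ofReal (Real.exp (T * (v * G))) / (ε : ℝ≥0∞)
      = ENNReal.ofReal (Real.exp (T * (v * G)) / Real.exp (l * A)) := by
    rw [hεofReal, ← ENNReal.ofReal_div_of_pos (Real.exp_pos _)]
  -- final analytic inequality
  have hfinal : (T:ℝ) * (v * G) - l * A ≤ -x := by
    have hGle : G ≤ l ^ 2 / (2 * (1 - l * b / 3)) := by
      have hq := exp_quad_bound (u := l * b) (by positivity) hlb3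
      rw [hGdef]
      calc (Real.exp (l * b) - 1 - l * b) / b ^ 2
          ≤ ((l * b) ^ 2 / (2 * (1 - l * b / 3))) / b ^ 2 := by
            apply div_le_div_of_nonneg_right hq (by positivity)
        _ = l ^ 2 / (2 * (1 - l * b / 3)) := by
            rw [div_div, mul_pow, mul_comm (2 * (1 - l * b / 3)) (b ^ 2), ← div_div]
            rw [mul_div_assoc, div_self (pow_ne_zero 2 hb.ne'), mul_one]
    have hkey1 : 1 - l * b / 3 = 1 / p := by
      rw [hldef, hpdef]
      field_simp
      ring
    have h1mlb : 0 < 1 - l * b / 3 := by linarith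
    have hTvG : (T:ℝ) * (v * G) ≤ x / p := by
      have h2 : l ^ 2 / (2 * (1 - l * b / 3)) = s ^ 2 / (2 * p) := by
        rw [hkey1, hldef]
        field_simp
      have h3 : (T:ℝ) * (v * (s ^ 2 / (2 * p))) = x / p := by
        rw [hs2]
        field_simp
      calc (T:ℝ) * (v * G) ≤ (T:ℝ) * (v * (s ^ 2 / (2 * p))) := by
            apply mul_le_mul_of_nonneg_left ?_ hT0.le
            apply mul_le_mul_of_nonneg_left ?_ hv.le
            rw [← h2]; exact hGle
        _ = x / p := h3
    have hsqrtmul : s * Real.sqrt (2 * x * v * T) = 2 * x := by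
      rw [hsdef, ← Real.sqrt_mul (by positivity)]
      have harg : 2 * x / (v * T) * (2 * x * v * T) = (2 * x) ^ 2 := by
        field_simp
      rw [harg, Real.sqrt_sq (by positivity)]
    have hlA : l * A = (2 * x + x * b * s / 3) / p := by
      rw [hAdef, hldef]
      rw [mul_add]
      have h1 : s / p * Real.sqrt (2 * x * v * T) = 2 * x / p := by
        rw [div_mul_eq_mul_div, hsqrtmul]
      have h2 : s / p * (x * b / 3) = x * b * s / 3 / p := by
        field_simp
      rw [h1, h2, ← add_div]
    have hcomb : x / p - (2 * x + x * b * s / 3) / p = -x := by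
      rw [div_sub_div_same]
      rw [hpdef]
      field_simp
      ring
    calc (T:ℝ) * (v * G) - l * A ≤ x / p - (2 * x + x * b * s / 3) / p := by
          rw [hlA]; linarith
      _ = -x := hcomb
  -- put everything together
  calc μ {ω | ∃ m ≤ T, A ≤ S m ω} ≤ μ D := measure_mono hsubset
    _ ≤ ENNReal.ofReal (Real.exp (T * (v * G))) / (ε : ℝ≥0∞) := hμD
    _ = ENNReal.ofReal (Real.exp (T * (v * G)) / Real.exp (l * A)) := hdiv
    _ ≤ ENNReal.ofReal (Real.exp (-x)) := by
        apply ENNReal.ofReal_le_ofReal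
        rw [← Real.exp_sub]
        exact Real.exp_le_exp.2 hfinal
theorem bernstein_peeling_martingale
    {Ω : Type*} {m0 : MeasurableSpace Ω} (μ : Measure Ω) [IsProbabilityMeasure μ]
    (ℱ : Filtration ℕ m0)
    (Z : ℕ → Ω → ℝ) (b v : ℝ) (hb : 0 < b) (hv : 0 < v)
    (hadapt : ∀ t, 1 ≤ t → StronglyMeasurable[ℱ t] (Z t))
    (hmds : ∀ t, 1 ≤ t → μ[Z t | ℱ (t - 1)] =ᵐ[μ] 0)
    (hbdd : ∀ t, 1 ≤ t → ∀ᵐ ω ∂μ, |Z t ω| ≤ b)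
    (hvar : ∀ t, 1 ≤ t → ∀ᵐ ω ∂μ, (μ[fun ω' => (Z t ω') ^ 2 | ℱ (t - 1)]) ω ≤ v)
    (n : ℕ) (N : Ω → ℕ) (hNmeas : Measurable N)
    (hN : ∀ ω, 1 ≤ N ω ∧ N ω ≤ n)
    (c δ : ℝ) (hc : 1 < c) (hcn : c ≤ n) (hδ : δ ∈ Set.Ioo (0 : ℝ) 1) :
    μ {ω | Real.sqrt (2 * (c * Real.log ((⌈Real.log n / Real.log c⌉₊ : ℝ) / δ)) * v / N ω)
        + (c * Real.log ((⌈Real.log n / Real.log c⌉₊ : ℝ) / δ)) * b / (3 * N ω)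
        ≤ (1 / (N ω : ℝ)) * ∑ t ∈ Finset.Icc 1 (N ω), Z t ω}
      ≤ ENNReal.ofReal δ := by
  classical
  obtain ⟨hδ0, hδ1⟩ := hδ
  set K : ℕ := ⌈Real.log n / Real.log c⌉₊ with hKdef
  set x : ℝ := Real.log ((K : ℝ) / δ) with hxdef
  have hc0 : (0:ℝ) < c := lt_trans one_pos hc
  have hn1 : (1:ℝ) < (n:ℝ) := lt_of_lt_of_le hc hcn
  have hn0 : (0:ℝ) < n := lt_trans one_pos hn1
  have hnn1 : 1 ≤ n := by exact_mod_cast hn1.le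
  have hlogc : 0 < Real.log c := Real.log_pos hc
  have hlogn : 0 < Real.log n := Real.log_pos hn1
  have hK1 : 1 ≤ K := by
    rw [hKdef]
    exact Nat.one_le_ceil_iff.2 (div_pos hlogn hlogc)
  have hKr : (1:ℝ) ≤ (K:ℝ) := by exact_mod_cast hK1
  have hKδ : (0:ℝ) < (K:ℝ) / δ := by positivity
  have hx0 : 0 < x := by
    rw [hxdef]
    apply Real.log_pos
    rw [lt_div_iff₀ hδ0]
    linarith
  have hcK : (n:ℝ) ≤ c ^ K := by
    have h1 : Real.log n / Real.log c ≤ (K:ℝ) := Nat.le_ceil _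
    have h2 : Real.log n ≤ (K:ℝ) * Real.log c := by
      rw [div_le_iff₀ hlogc] at h1
      linarith
    calc (n:ℝ) = Real.exp (Real.log n) := (Real.exp_log hn0).symm
      _ ≤ Real.exp ((K:ℝ) * Real.log c) := Real.exp_le_exp.2 h2
      _ = c ^ K := by rw [← Real.log_pow, Real.exp_log (pow_pos hc0 _)]
  set T : ℕ → ℕ := fun j => min n ⌊c ^ (j + 1)⌋₊ with hTdef
  have hcpow1 : ∀ j : ℕ, (1:ℝ) ≤ c ^ j := fun j => one_le_pow₀ hc.le
  have hT1 : ∀ j, 1 ≤ T j := by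
    intro j
    refine le_min hnn1 (Nat.le_floor ?_)
    have := hcpow1 (j + 1)
    exact_mod_cast this
  have hTle : ∀ j : ℕ, ((T j : ℝ)) ≤ c ^ (j + 1) := by
    intro j
    calc ((T j : ℝ)) ≤ ((⌊c ^ (j + 1)⌋₊ : ℕ) : ℝ) := by
          exact_mod_cast min_le_right _ _
      _ ≤ c ^ (j + 1) := Nat.floor_le (by positivity)
  -- the per-block events
  set S : ℕ → Ω → ℝ := fun m ω => ∑ t ∈ Finset.Icc 1 m, Z t ω with hSdef
  set E : ℕ → Set Ω := fun j =>
    {ω | ∃ m ≤ T j, Real.sqrt (2 * x * v * (T j)) + x * b / 3 ≤ S m ω} with hEdef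
  have hblock : ∀ j, μ (E j) ≤ ENNReal.ofReal (Real.exp (-x)) := by
    intro j
    exact bernstein_block μ ℱ Z b v hb hv hadapt hmds hbdd hvar (T j) (hT1 j) x hx0
  -- inclusion of the target event in the union of block events
  have hsubset : {ω | Real.sqrt (2 * (c * x) * v / N ω) + (c * x) * b / (3 * N ω)
      ≤ (1 / (N ω : ℝ)) * S (N ω) ω} ⊆ ⋃ j ∈ Finset.range K, E j := by
    intro ω hω
    simp only [Set.mem_setOf_eq] at hω
    obtain ⟨hm1, hmn⟩ := hN ω
    set m : ℕ := N ω with hmdef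
    have hm0 : (0:ℝ) < m := by exact_mod_cast hm1
    have hm1r : (1:ℝ) ≤ (m:ℝ) := by exact_mod_cast hm1
    have hmnr : (m:ℝ) ≤ (n:ℝ) := by exact_mod_cast hmn
    set j : ℕ := min (⌊Real.log m / Real.log c⌋₊) (K - 1) with hjdef
    have hjK : j < K := by
      have : j ≤ K - 1 := min_le_right _ _
      omega
    have hcjm : c ^ j ≤ (m:ℝ) := by
      have hj1 : j ≤ ⌊Real.log m / Real.log c⌋₊ := min_le_left _ _
      have hfl : (⌊Real.log m / Real.log c⌋₊ : ℝ) ≤ Real.log m / Real.log c :=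
        Nat.floor_le (div_nonneg (Real.log_natCast_nonneg m) hlogc.le)
      have h2 : (⌊Real.log m / Real.log c⌋₊ : ℝ) * Real.log c ≤ Real.log m := by
        rw [← le_div_iff₀ hlogc]
        exact hfl
      have h3 : (j:ℝ) * Real.log c ≤ Real.log m := by
        refine le_trans ?_ h2
        apply mul_le_mul_of_nonneg_right ?_ hlogc.le
        exact_mod_cast hj1
      calc c ^ j = Real.exp ((j:ℝ) * Real.log c) := by
            rw [← Real.log_pow, Real.exp_log (pow_pos hc0 _)]
        _ ≤ Real.exp (Real.log m) := Real.exp_le_exp.2 h3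
        _ = (m:ℝ) := Real.exp_log hm0
    have hmT : m ≤ T j := by
      refine le_min hmn (Nat.le_floor ?_)
      show (m:ℝ) ≤ c ^ (j + 1)
      by_cases hcase : ⌊Real.log m / Real.log c⌋₊ ≤ K - 1
      · have hj : j = ⌊Real.log m / Real.log c⌋₊ := min_eq_left hcase
        have h1 : Real.log m / Real.log c < (j:ℝ) + 1 := by
          rw [hj]
          exact Nat.lt_floor_add_one _
        have h2 : Real.log m < ((j:ℝ) + 1) * Real.log c := by
          rw [div_lt_iff₀ hlogc] at h1
          linarith
        have h3 : (m:ℝ) < c ^ (j + 1) := by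
          calc (m:ℝ) = Real.exp (Real.log m) := (Real.exp_log hm0).symm
            _ < Real.exp (((j:ℝ) + 1) * Real.log c) := Real.exp_lt_exp.2 h2
            _ = c ^ (j + 1) := by
                rw [show ((j:ℝ) + 1) = ((j + 1 : ℕ) : ℝ) by push_cast; ring]
                rw [← Real.log_pow, Real.exp_log (pow_pos hc0 _)]
        exact h3.le
      · have hj : j = K - 1 := min_eq_right (le_of_not_ge hcase)
        have hj1 : j + 1 = K := by omega
        rw [hj1]
        exact le_trans hmnr hcK
    -- threshold comparison
    have hTcm : ((T j : ℝ)) ≤ c * m := by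
      calc ((T j : ℝ)) ≤ c ^ (j + 1) := hTle j
        _ = c * c ^ j := by rw [pow_succ]; ring
        _ ≤ c * m := mul_le_mul_of_nonneg_left hcjm hc0.le
    have hSm : Real.sqrt (2 * x * v * (T j)) + x * b / 3 ≤ S m ω := by
      have hmul := mul_le_mul_of_nonneg_left hω hm0.le
      have hrhs : (m:ℝ) * ((1 / (m : ℝ)) * S m ω) = S m ω := by
        field_simp
      have hterm1 : (m:ℝ) * Real.sqrt (2 * (c * x) * v / m) = Real.sqrt (2 * (c * x) * v * m) := by
        rw [show 2 * (c * x) * v * (m:ℝ) = (m:ℝ) ^ 2 * (2 * (c * x) * v / m) by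
          field_simp]
        rw [Real.sqrt_mul (sq_nonneg _), Real.sqrt_sq hm0.le]
      have hterm2 : (m:ℝ) * ((c * x) * b / (3 * m)) = (c * x) * b / 3 := by
        field_simp
      have hlhs : (m:ℝ) * (Real.sqrt (2 * (c * x) * v / m) + (c * x) * b / (3 * m))
          = Real.sqrt (2 * (c * x) * v * m) + (c * x) * b / 3 := by
        rw [mul_add, hterm1, hterm2]
      rw [hlhs, hrhs] at hmul
      refine le_trans ?_ hmul
      have hs1 : Real.sqrt (2 * x * v * (T j)) ≤ Real.sqrt (2 * (c * x) * v * m) := by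
        apply Real.sqrt_le_sqrt
        calc 2 * x * v * ((T j : ℝ)) ≤ 2 * x * v * (c * m) := by
              apply mul_le_mul_of_nonneg_left hTcm (by positivity)
          _ = 2 * (c * x) * v * m := by ring
      have hs2 : x * b / 3 ≤ (c * x) * b / 3 := by
        nlinarith [mul_nonneg (mul_nonneg (sub_nonneg.2 hc.le) hx0.le) hb.le]
      linarith
    refine Set.mem_biUnion (Finset.mem_coe.2 (Finset.mem_range.2 hjK)) ?_
    exact ⟨m, hmT, hSm⟩
  -- union bound
  have hKexp : (K:ℝ) * Real.exp (-x) = δ := by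
    rw [hxdef, Real.exp_neg, Real.exp_log hKδ]
    have hK0 : (K:ℝ) ≠ 0 := by positivity
    field_simp
  calc μ {ω | Real.sqrt (2 * (c * x) * v / N ω) + (c * x) * b / (3 * N ω)
        ≤ (1 / (N ω : ℝ)) * S (N ω) ω}
      ≤ μ (⋃ j ∈ Finset.range K, E j) := measure_mono hsubset
    _ ≤ ∑ j ∈ Finset.range K, μ (E j) := measure_biUnion_finset_le _ _
    _ ≤ ∑ j ∈ Finset.range K, ENNReal.ofReal (Real.exp (-x)) :=
        Finset.sum_le_sum fun j _ => hblock j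
    _ = (K : ℝ≥0∞) * ENNReal.ofReal (Real.exp (-x)) := by
        rw [Finset.sum_const, Finset.card_range, nsmul_eq_mul]
    _ = ENNReal.ofReal ((K:ℝ) * Real.exp (-x)) := by
        rw [ENNReal.ofReal_mul (by positivity)]
        congr 1
        exact (ENNReal.ofReal_natCast K).symm
    _ = ENNReal.ofReal δ := by rw [hKexp]
end

section
/- Bernstein concentration for Markov transition counts: let (X_t)_{1≤t≤n} be a Markov chain on a finite state space S with transition matrix P, fix states x, y ∈ S, let T_{x,n} = Σ_{t=1}^{n−1} 1{X_t = x} and N_{x,y,n} = Σ_{t=2}^{n} 1{X_{t−1} = x, X_t = y}. Then the sequence Z_t = 1{X_{t−1} = x}(1{X_t = y} − P(x,y)) is a martingale difference sequence with |Z_t| ≤ 1 and E[Z_t² | F_{t−1}] = P(x,y)(1 − P(x,y))·1{X_{t−1} = x}, and consequently, for any δ ∈ (0,1) and c > 1, with probability at least 1 − δ, |N_{x,y,n} − T_{x,n}·P(x,y)| ≤ √(2·P(x,y)(1 − P(x,y))·ζ·T_{x,n}) + ζ/3, where ζ = c·log(⌈log n / log c⌉ · 2/δ). -/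
open MeasureTheory

/-- The martingale-difference sequence associated to transitions `x → y`:
`Z t = 1{X t = x} (1{X (t+1) = y} - P x y)`. -/
def markovMDS {Ω S : Type*} [DecidableEq S] (X : ℕ → Ω → S) (P : S → S → ℝ)
    (x y : S) (t : ℕ) (ω : Ω) : ℝ :=
  (if X t ω = x then (1 : ℝ) else 0) * ((if X (t + 1) ω = y then (1 : ℝ) else 0) - P x y)

/-- Number of visits to `x` among the first `n - 1` states. -/
def visitCount {Ω S : Type*} [DecidableEq S] (X : ℕ → Ω → S) (x : S) (n : ℕ) (ω : Ω) : ℝ :=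
  ∑ t ∈ Finset.range (n - 1), if X t ω = x then (1 : ℝ) else 0

/-- Number of observed transitions `x → y` among the first `n - 1` steps. -/
def transCount {Ω S : Type*} [DecidableEq S] (X : ℕ → Ω → S) (x y : S) (n : ℕ) (ω : Ω) : ℝ :=
  ∑ t ∈ Finset.range (n - 1), if X t ω = x ∧ X (t + 1) ω = y then (1 : ℝ) else 0


open Finset in

/-- If `f 0 = 0` and `f' ≥ 0` on `[0,∞)`, then `f ≥ 0` on `[0,∞)`. -/
lemma nonneg_of_deriv_nonneg (f f' : ℝ → ℝ) (hd : ∀ x, HasDerivAt f (f' x) x)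
    (h0 : f 0 = 0) (h' : ∀ x, 0 ≤ x → 0 ≤ f' x) : ∀ x, 0 ≤ x → 0 ≤ f x := by
  have hdiff : ∀ x, DifferentiableAt ℝ f x := fun x => (hd x).differentiableAt
  have hmono : MonotoneOn f (Set.Ici (0:ℝ)) := by
    apply monotoneOn_of_deriv_nonneg (convex_Ici 0)
      (fun x _ => (hdiff x).continuousAt.continuousWithinAt)
      (fun x hx => (hdiff x).differentiableWithinAt)
    intro x hx
    rw [interior_Ici] at hx
    rw [(hd x).deriv]
    exact h' x (le_of_lt hx)
  intro x hx
  calc (0:ℝ) = f 0 := h0.symm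
  _ ≤ f x := hmono (by simp) hx hx

/-- Key pointwise mgf bound: for `|z| ≤ 1` and `0 ≤ l`,
`exp (l z) ≤ 1 + l z + z² (exp l - l - 1)`. -/
lemma exp_mul_le_quad {l z : ℝ} (hl : 0 ≤ l) (hz : |z| ≤ 1) :
    Real.exp (l * z) ≤ 1 + l * z + z ^ 2 * (Real.exp l - l - 1) := by
  have hz1 : z ≤ 1 := le_trans (le_abs_self z) hz
  -- F(l) = RHS - LHS, F' and F'' computations
  set F : ℝ → ℝ := fun l => 1 + l * z + z ^ 2 * (Real.exp l - l - 1) - Real.exp (l * z) with hF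
  set F' : ℝ → ℝ := fun l => z + z ^ 2 * (Real.exp l - 1) - Real.exp (l * z) * z with hF'
  set F'' : ℝ → ℝ := fun l => z ^ 2 * Real.exp l - Real.exp (l * z) * z * z with hF''
  have hdF : ∀ a : ℝ, HasDerivAt F (F' a) a := by
    intro a
    have e1 : HasDerivAt (fun b : ℝ => b * z) z a := hasDerivAt_mul_const z
    have e5 : HasDerivAt (fun b : ℝ => Real.exp (b * z)) (Real.exp (a * z) * z) a := e1.exp
    have e3 : HasDerivAt (fun b : ℝ => z ^ 2 * (Real.exp b - b - 1)) (z ^ 2 * (Real.exp a - 1)) a := by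
      have := ((Real.hasDerivAt_exp a).sub (hasDerivAt_id a)).sub_const 1
      simpa using this.const_mul (z ^ 2)
    have := (((hasDerivAt_const a (1:ℝ)).add e1).add e3).sub e5
    refine this.congr_deriv ?_
    simp only [hF']; try ring
  have hdF' : ∀ a : ℝ, HasDerivAt F' (F'' a) a := by
    intro a
    have e1 : HasDerivAt (fun b : ℝ => b * z) z a := hasDerivAt_mul_const z
    have e5 : HasDerivAt (fun b : ℝ => Real.exp (b * z) * z) (Real.exp (a * z) * z * z) a :=
      e1.exp.mul_const z
    have e3 : HasDerivAt (fun b : ℝ => z ^ 2 * (Real.exp b - 1)) (z ^ 2 * Real.exp a) a := by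
      have := (Real.hasDerivAt_exp a).sub_const 1
      simpa using this.const_mul (z ^ 2)
    have := ((hasDerivAt_const a z).add e3).sub e5
    refine this.congr_deriv ?_
    simp only [hF'']; try ring
  have hF'nonneg : ∀ a, 0 ≤ a → 0 ≤ F' a := by
    apply nonneg_of_deriv_nonneg F' F'' hdF'
    · simp [hF']
    · intro a ha
      have h1 : Real.exp (a * z) ≤ Real.exp a := by
        apply Real.exp_le_exp.mpr
        nlinarith
      have h2 : (0:ℝ) ≤ z ^ 2 := sq_nonneg z
      show 0 ≤ z ^ 2 * Real.exp a - Real.exp (a * z) * z * z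
      have := Real.exp_pos (a * z)
      nlinarith
  have := nonneg_of_deriv_nonneg F F' hdF (by simp [hF]) hF'nonneg l hl
  simp only [hF] at this
  linarith

/-- `(1 - l/3)(exp l - l - 1) ≤ l²/2` for `l ≥ 0`. -/
lemma quad_bound_phi {l : ℝ} (hl : 0 ≤ l) :
    (1 - l / 3) * (Real.exp l - l - 1) ≤ l ^ 2 / 2 := by
  set g3 : ℝ → ℝ := fun a => Real.exp a * a / 3
  set g2 : ℝ → ℝ := fun a => 1/3 + Real.exp a * (a - 1) / 3 with hg2
  set g1 : ℝ → ℝ := fun a => (a + 2)/3 + Real.exp a * (a - 2) / 3 with hg1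
  set g : ℝ → ℝ := fun a => a ^ 2 / 2 - (1 - a/3) * (Real.exp a - a - 1) with hg
  have hd2 : ∀ a : ℝ, HasDerivAt g2 (g3 a) a := by
    intro a
    have := ((Real.hasDerivAt_exp a).mul ((hasDerivAt_id a).sub_const 1)).div_const 3
    have h2 := (hasDerivAt_const a (1/3:ℝ)).add this
    refine h2.congr_deriv ?_
    simp only [g3, id_eq]; try ring
  have hd1 : ∀ a : ℝ, HasDerivAt g1 (g2 a) a := by
    intro a
    have e1 : HasDerivAt (fun b:ℝ => (b + 2)/3) (1/3) a := by
      simpa using ((hasDerivAt_id a).add_const 2).div_const 3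
    have e2 := ((Real.hasDerivAt_exp a).mul ((hasDerivAt_id a).sub_const 2)).div_const 3
    have := e1.add e2
    refine this.congr_deriv ?_
    simp only [hg2, id_eq]; try ring
  have hd : ∀ a : ℝ, HasDerivAt g (g1 a) a := by
    intro a
    have e1 : HasDerivAt (fun b:ℝ => b ^ 2 / 2) a a := by
      simpa using (hasDerivAt_pow 2 a).div_const 2
    have e2 : HasDerivAt (fun b:ℝ => 1 - b/3) (-(1/3)) a := by
      simpa using ((hasDerivAt_id a).div_const 3).const_sub 1
    have e3 : HasDerivAt (fun b:ℝ => Real.exp b - b - 1) (Real.exp a - 1) a := by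
      simpa using ((Real.hasDerivAt_exp a).sub (hasDerivAt_id a)).sub_const 1
    have := e1.sub (e2.mul e3)
    refine this.congr_deriv ?_
    simp only [hg1, id_eq]; try ring
  have h2 : ∀ a, 0 ≤ a → 0 ≤ g2 a := by
    apply nonneg_of_deriv_nonneg g2 g3 hd2 (by norm_num [hg2])
    intro a ha
    show 0 ≤ Real.exp a * a / 3
    positivity
  have h1 : ∀ a, 0 ≤ a → 0 ≤ g1 a :=
    nonneg_of_deriv_nonneg g1 g2 hd1 (by norm_num [hg1]) h2
  have h0 : ∀ a, 0 ≤ a → 0 ≤ g a :=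
    nonneg_of_deriv_nonneg g g1 hd (by norm_num [hg]) h1
  have := h0 l hl
  simp only [hg] at this
  linarith

/-- Choice of the Chernoff parameter realizing the Bernstein inversion. -/
lemma chernoff_param (v ρ : ℝ) (hv : 0 ≤ v) (hρ : 0 < ρ) :
    ∃ lam : ℝ, 0 ≤ lam ∧
      ρ ≤ lam * (Real.sqrt (2 * v * ρ) + ρ / 3) - (Real.exp lam - lam - 1) * v := by
  rcases eq_or_lt_of_le hv with hv0 | hv0
  · refine ⟨3, by norm_num, ?_⟩
    rw [← hv0]
    have h0 : Real.sqrt (2 * 0 * ρ) = 0 := by norm_num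
    rw [h0]
    ring_nf
    linarith
  · set s := Real.sqrt (2 * v * ρ) with hs
    have hs0 : 0 < s := Real.sqrt_pos.mpr (by positivity)
    have hs2 : s ^ 2 = 2 * v * ρ := Real.sq_sqrt (by positivity)
    set D := s + 2 * ρ / 3 with hD
    have hD0 : 0 < D := by positivity
    set lam := 2 * ρ / D with hlam
    have hlam0 : 0 < lam := by positivity
    refine ⟨lam, hlam0.le, ?_⟩
    have h2 : 1 - lam / 3 = s / D := by
      rw [hlam, hD]
      field_simp
      ring
    have h1 : s / D * (Real.exp lam - lam - 1) ≤ lam ^ 2 / 2 := by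
      rw [← h2]; exact quad_bound_phi hlam0.le
    have hphi : Real.exp lam - lam - 1 ≤ 2 * ρ ^ 2 / (s * D) := by
      rw [le_div_iff₀ (mul_pos hs0 hD0)]
      have h3 := mul_le_mul_of_nonneg_right h1 (sq_nonneg D)
      have e1 : s / D * (Real.exp lam - lam - 1) * D ^ 2
          = (Real.exp lam - lam - 1) * (s * D) := by field_simp
      have e2 : lam ^ 2 / 2 * D ^ 2 = 2 * ρ ^ 2 := by rw [hlam]; field_simp
      rw [e1, e2] at h3
      exact h3
    have hvs : v = s ^ 2 / (2 * ρ) := by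
      rw [hs2]; field_simp
    have key : lam * (s + ρ / 3) - 2 * ρ ^ 2 / (s * D) * v = ρ := by
      rw [hlam, hD, hvs, hD] at *
      field_simp
      ring
    have hmul : (Real.exp lam - lam - 1) * v ≤ 2 * ρ ^ 2 / (s * D) * v :=
      mul_le_mul_of_nonneg_right hphi hv
    linarith

lemma integrable_of_bound_all {Ω : Type*} {m0 : MeasurableSpace Ω} {μ : Measure Ω}
    [IsFiniteMeasure μ] {f : Ω → ℝ} (hf : AEStronglyMeasurable f μ) (C : ℝ)
    (h : ∀ ω, |f ω| ≤ C) : Integrable f μ :=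
  (integrable_const C).mono' hf (ae_of_all _ (by simpa [Real.norm_eq_abs] using h))

/-- mgf bound for the exponential supermartingale. -/
lemma mgf_bound {Ω : Type*} {m0 : MeasurableSpace Ω} (μ : Measure Ω) [IsProbabilityMeasure μ]
    (ℱ : Filtration ℕ m0) (Z W : ℕ → Ω → ℝ) (σ2 : ℝ) (hσ0 : 0 ≤ σ2)
    (hZmeas : ∀ t, StronglyMeasurable[ℱ (t + 1)] (Z t))
    (hWmeas : ∀ t, StronglyMeasurable[ℱ t] (W t))
    (hZbd : ∀ t ω, |Z t ω| ≤ 1)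
    (hWbd : ∀ t ω, 0 ≤ W t ω ∧ W t ω ≤ 1)
    (hcond1 : ∀ t, μ[Z t | ℱ t] =ᵐ[μ] 0)
    (hcond2 : ∀ t, μ[(fun ω => Z t ω ^ 2) | ℱ t] =ᵐ[μ] fun ω => σ2 * W t ω)
    (lam : ℝ) (hlam : 0 ≤ lam) (n : ℕ) :
    ∫ ω, Real.exp (lam * (∑ t ∈ Finset.range n, Z t ω)
      - (Real.exp lam - lam - 1) * σ2 * (∑ t ∈ Finset.range n, W t ω)) ∂μ ≤ 1 := by
  have hφ0 : 0 ≤ Real.exp lam - lam - 1 := by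
    have := Real.add_one_le_exp lam; linarith
  set φ := Real.exp lam - lam - 1 with hφ
  -- strong measurability of the partial exponential w.r.t. ℱ n
  have hsm : ∀ n : ℕ, StronglyMeasurable[ℱ n]
      (fun ω => Real.exp (lam * (∑ t ∈ Finset.range n, Z t ω)
        - φ * σ2 * (∑ t ∈ Finset.range n, W t ω))) := by
    intro n
    apply Continuous.comp_stronglyMeasurable Real.continuous_exp
    apply StronglyMeasurable.sub
    · apply StronglyMeasurable.const_mul
      apply Finset.stronglyMeasurable_fun_sum
      intro t ht
      exact (hZmeas t).mono (ℱ.mono (by simp at ht; omega))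
    · apply StronglyMeasurable.const_mul
      apply Finset.stronglyMeasurable_fun_sum
      intro t ht
      exact (hWmeas t).mono (ℱ.mono (by simp at ht; omega))
  -- bounds on the partial exponential
  have hGbd : ∀ n : ℕ, ∀ ω, Real.exp (lam * (∑ t ∈ Finset.range n, Z t ω)
      - φ * σ2 * (∑ t ∈ Finset.range n, W t ω)) ≤ Real.exp (lam * n) := by
    intro n ω
    apply Real.exp_le_exp.mpr
    have h1 : (∑ t ∈ Finset.range n, Z t ω) ≤ n := by
      calc (∑ t ∈ Finset.range n, Z t ω) ≤ ∑ t ∈ Finset.range n, (1:ℝ) :=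
        Finset.sum_le_sum (fun t _ => le_trans (le_abs_self _) (hZbd t ω))
      _ = n := by simp
    have h2 : (0:ℝ) ≤ ∑ t ∈ Finset.range n, W t ω :=
      Finset.sum_nonneg (fun t _ => (hWbd t ω).1)
    nlinarith [mul_le_mul_of_nonneg_left h1 hlam, mul_nonneg (mul_nonneg hφ0 hσ0) h2]
  induction n with
  | zero => simp
  | succ n ih =>
    set G : Ω → ℝ := fun ω => Real.exp (lam * (∑ t ∈ Finset.range n, Z t ω)
      - φ * σ2 * (∑ t ∈ Finset.range n, W t ω)) with hG
    set A : Ω → ℝ := fun ω => Real.exp (lam * (∑ t ∈ Finset.range n, Z t ω)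
      - φ * σ2 * (∑ t ∈ Finset.range n, W t ω) - φ * σ2 * W n ω) with hA
    set E : Ω → ℝ := fun ω => Real.exp (lam * Z n ω) with hE
    -- split of the integrand
    have hsplit : ∀ ω, Real.exp (lam * (∑ t ∈ Finset.range (n+1), Z t ω)
        - φ * σ2 * (∑ t ∈ Finset.range (n+1), W t ω)) = A ω * E ω := by
      intro ω
      rw [hA, hE, ← Real.exp_add, Finset.sum_range_succ, Finset.sum_range_succ]
      ring_nf
    -- measurability of A
    have hAmeas : StronglyMeasurable[ℱ n] A := by
      apply Continuous.comp_stronglyMeasurable Real.continuous_exp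
      apply StronglyMeasurable.sub
      · apply StronglyMeasurable.sub
        · apply StronglyMeasurable.const_mul
          apply Finset.stronglyMeasurable_fun_sum
          intro t ht
          exact (hZmeas t).mono (ℱ.mono (by simp at ht; omega))
        · apply StronglyMeasurable.const_mul
          apply Finset.stronglyMeasurable_fun_sum
          intro t ht
          exact (hWmeas t).mono (ℱ.mono (by simp at ht; omega))
      · exact (hWmeas n).const_mul _
    -- bounds
    have hA0 : ∀ ω, 0 ≤ A ω := fun ω => (Real.exp_pos _).le
    have hAbd : ∀ ω, |A ω| ≤ Real.exp (lam * n) := by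
      intro ω
      rw [abs_of_nonneg (hA0 ω), hA]
      calc Real.exp (lam * (∑ t ∈ Finset.range n, Z t ω)
          - φ * σ2 * (∑ t ∈ Finset.range n, W t ω) - φ * σ2 * W n ω)
          ≤ Real.exp (lam * (∑ t ∈ Finset.range n, Z t ω)
            - φ * σ2 * (∑ t ∈ Finset.range n, W t ω)) := by
            apply Real.exp_le_exp.mpr
            nlinarith [mul_nonneg (mul_nonneg hφ0 hσ0) (hWbd n ω).1]
      _ ≤ Real.exp (lam * n) := hGbd n ω
    have hEbd : ∀ ω, |E ω| ≤ Real.exp lam := by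
      intro ω
      rw [hE, abs_of_nonneg (Real.exp_pos _).le]
      apply Real.exp_le_exp.mpr
      nlinarith [le_trans (le_abs_self _) (hZbd n ω), hlam]
    -- integrability
    have hZm0 : ∀ t, AEStronglyMeasurable (Z t) μ :=
      fun t => ((hZmeas t).mono (ℱ.le (t+1))).aestronglyMeasurable
    have hEmeas : AEStronglyMeasurable E μ := by
      apply Continuous.comp_aestronglyMeasurable Real.continuous_exp
      exact (hZm0 n).const_mul lam
    have hEint : Integrable E μ := integrable_of_bound_all hEmeas _ hEbd
    have hAmeas0 : AEStronglyMeasurable A μ := (hAmeas.mono (ℱ.le n)).aestronglyMeasurable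
    have hAEint : Integrable (A * E) μ := by
      apply integrable_of_bound_all (hAmeas0.mul hEmeas) (Real.exp (lam * n) * Real.exp lam)
      intro ω
      rw [Pi.mul_apply, abs_mul]
      exact mul_le_mul (hAbd ω) (hEbd ω) (abs_nonneg _) (Real.exp_pos _).le
    -- conditional expectation bound for E
    have hquad : ∀ ω, E ω ≤ 1 + lam * Z n ω + Z n ω ^ 2 * φ := by
      intro ω
      exact exp_mul_le_quad hlam (hZbd n ω)
    have hquadint : Integrable (fun ω => 1 + lam * Z n ω + Z n ω ^ 2 * φ) μ := by
      apply integrable_of_bound_all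
      · apply AEStronglyMeasurable.add
        apply AEStronglyMeasurable.add aestronglyMeasurable_const
        · exact (hZm0 n).const_mul lam
        · exact (((hZm0 n).mul (hZm0 n)).mul_const φ).congr (by
            filter_upwards with ω; simp only [Pi.mul_apply, sq])
      · intro ω
        have h1 := abs_le.mp (hZbd n ω)
        have h2 : Z n ω ^ 2 ≤ 1 := by nlinarith [sq_nonneg (Z n ω)]
        show |1 + lam * Z n ω + Z n ω ^ 2 * φ| ≤ 1 + lam + φ
        rw [abs_le]; constructor <;> nlinarith [sq_nonneg (Z n ω)]
    have hEcond : μ[E | ℱ n] ≤ᵐ[μ] fun ω => Real.exp (φ * σ2 * W n ω) := by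
      have step1 : μ[E | ℱ n] ≤ᵐ[μ] μ[(fun ω => 1 + lam * Z n ω + Z n ω ^ 2 * φ) | ℱ n] :=
        condExp_mono hEint hquadint (ae_of_all _ hquad)
      have step2 : μ[(fun ω => 1 + lam * Z n ω + Z n ω ^ 2 * φ) | ℱ n]
          =ᵐ[μ] fun ω => 1 + φ * (σ2 * W n ω) := by
        have hint1 : Integrable (fun ω => (1:ℝ) + lam * Z n ω) μ := by
          apply integrable_of_bound_all
          · exact aestronglyMeasurable_const.add ((hZm0 n).const_mul lam)
          · intro ω
            show |1 + lam * Z n ω| ≤ 1 + lam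
            rw [abs_le]; constructor <;> nlinarith [abs_le.mp (hZbd n ω)]
        have hint2 : Integrable (fun ω => Z n ω ^ 2 * φ) μ := by
          refine integrable_of_bound_all ((((hZm0 n).mul (hZm0 n)).mul_const φ).congr (by
              filter_upwards with ω; simp only [Pi.mul_apply, sq])) φ ?_
          intro ω
          have h2 : Z n ω ^ 2 ≤ 1 := by
            nlinarith [abs_le.mp (hZbd n ω), sq_nonneg (Z n ω)]
          rw [abs_mul, abs_of_nonneg (sq_nonneg _), abs_of_nonneg hφ0]
          nlinarith
        have e0 : (fun ω => 1 + lam * Z n ω + Z n ω ^ 2 * φ)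
            = (fun ω => (1:ℝ) + lam * Z n ω) + (fun ω => Z n ω ^ 2 * φ) := rfl
        rw [e0]
        refine (condExp_add hint1 hint2 _).trans ?_
        have e1 : μ[(fun ω => (1:ℝ) + lam * Z n ω) | ℱ n] =ᵐ[μ] fun _ => (1:ℝ) := by
          have e1a : (fun ω => (1:ℝ) + lam * Z n ω)
              = (fun _ => (1:ℝ)) + (lam • Z n) := by
            funext ω; simp [Pi.smul_apply, smul_eq_mul]
          rw [e1a]
          refine (condExp_add (integrable_const 1) ?_ _).trans ?_
          · exact integrable_of_bound_all ((hZm0 n).const_smul lam) lam (fun ω => by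
              simp only [Pi.smul_apply, smul_eq_mul, abs_mul, abs_of_nonneg hlam]
              exact mul_le_mul_of_nonneg_left (hZbd n ω) hlam |>.trans (by nlinarith))
          · have h2 := condExp_smul (μ := μ) (m := ℱ n) lam (Z n)
            rw [condExp_const (ℱ.le n)]
            filter_upwards [h2, hcond1 n] with ω h2ω h3ω
            simp only [Pi.add_apply, Pi.smul_apply, smul_eq_mul] at *
            rw [h2ω, h3ω]
            simp
        have e2 : μ[(fun ω => Z n ω ^ 2 * φ) | ℱ n] =ᵐ[μ] fun ω => φ * (σ2 * W n ω) := by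
          have e2a : (fun ω => Z n ω ^ 2 * φ) = φ • (fun ω => Z n ω ^ 2) := by
            funext ω; simp [Pi.smul_apply, smul_eq_mul]; ring
          rw [e2a]
          refine (condExp_smul (μ := μ) (m := ℱ n) φ _).trans ?_
          filter_upwards [hcond2 n] with ω hω
          simp only [Pi.smul_apply, smul_eq_mul]
          rw [hω]
        filter_upwards [e1, e2] with ω h1ω h2ω
        simp only [Pi.add_apply] at *
        rw [h1ω, h2ω]
      refine step1.trans (step2.trans_le ?_)
      apply ae_of_all
      intro ω
      have := Real.add_one_le_exp (φ * (σ2 * W n ω))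
      calc 1 + φ * (σ2 * W n ω) ≤ Real.exp (φ * (σ2 * W n ω)) := by linarith
      _ = Real.exp (φ * σ2 * W n ω) := by rw [mul_assoc]
    -- pull out the ℱ n-measurable factor and conclude
    have key : μ[A * E | ℱ n] =ᵐ[μ] A * μ[E | ℱ n] :=
      condExp_stronglyMeasurable_mul_of_bound (ℱ.le n) hAmeas hEint (Real.exp (lam * n))
        (ae_of_all _ fun ω => by simpa [Real.norm_eq_abs] using hAbd ω)
    have hle : μ[A * E | ℱ n] ≤ᵐ[μ] G := by
      filter_upwards [key, hEcond] with ω h1 h2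
      rw [h1, Pi.mul_apply]
      calc A ω * (μ[E | ℱ n]) ω ≤ A ω * Real.exp (φ * σ2 * W n ω) :=
        mul_le_mul_of_nonneg_left h2 (hA0 ω)
      _ = G ω := by
        rw [hA, hG]
        show Real.exp _ * Real.exp _ = _
        rw [← Real.exp_add]
        congr 1
        ring
    have hGint : Integrable G μ :=
      integrable_of_bound_all ((hsm n).mono (ℱ.le n)).aestronglyMeasurable _
        (fun ω => by rw [abs_of_nonneg (Real.exp_pos _).le]; exact hGbd n ω)
    calc ∫ ω, Real.exp (lam * (∑ t ∈ Finset.range (n+1), Z t ω)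
          - φ * σ2 * (∑ t ∈ Finset.range (n+1), W t ω)) ∂μ
        = ∫ ω, (A * E) ω ∂μ := integral_congr_ae (ae_of_all _ fun ω => hsplit ω)
      _ = ∫ ω, (μ[A * E | ℱ n]) ω ∂μ := (integral_condExp (ℱ.le n)).symm
      _ ≤ ∫ ω, G ω ∂μ := integral_mono_ae integrable_condExp hGint hle
      _ ≤ 1 := ih

/-- Freedman-type tail bound. -/
lemma freedman_tail {Ω : Type*} {m0 : MeasurableSpace Ω} (μ : Measure Ω) [IsProbabilityMeasure μ]
    (ℱ : Filtration ℕ m0) (Z W : ℕ → Ω → ℝ) (σ2 : ℝ) (hσ0 : 0 ≤ σ2)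
    (hZmeas : ∀ t, StronglyMeasurable[ℱ (t + 1)] (Z t))
    (hWmeas : ∀ t, StronglyMeasurable[ℱ t] (W t))
    (hZbd : ∀ t ω, |Z t ω| ≤ 1)
    (hWbd : ∀ t ω, 0 ≤ W t ω ∧ W t ω ≤ 1)
    (hcond1 : ∀ t, μ[Z t | ℱ t] =ᵐ[μ] 0)
    (hcond2 : ∀ t, μ[(fun ω => Z t ω ^ 2) | ℱ t] =ᵐ[μ] fun ω => σ2 * W t ω)
    (n : ℕ) (v ρ : ℝ) (hv : 0 ≤ v) (hρ : 0 < ρ) :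
    μ {ω | Real.sqrt (2 * v * ρ) + ρ / 3 ≤ ∑ t ∈ Finset.range n, Z t ω
        ∧ σ2 * (∑ t ∈ Finset.range n, W t ω) ≤ v}
      ≤ ENNReal.ofReal (Real.exp (-ρ)) := by
  obtain ⟨lam, hlam0, hkey⟩ := chernoff_param v ρ hv hρ
  have hφ0 : 0 ≤ Real.exp lam - lam - 1 := by
    have := Real.add_one_le_exp lam; linarith
  set φ := Real.exp lam - lam - 1 with hφ
  set G : Ω → ℝ := fun ω => Real.exp (lam * (∑ t ∈ Finset.range n, Z t ω)
    - φ * σ2 * (∑ t ∈ Finset.range n, W t ω)) with hG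
  have hGmeas : AEStronglyMeasurable G μ := by
    apply Continuous.comp_aestronglyMeasurable Real.continuous_exp
    apply AEStronglyMeasurable.sub
    · exact (Finset.aestronglyMeasurable_fun_sum _ (fun t _ =>
        ((hZmeas t).mono (ℱ.le (t+1))).aestronglyMeasurable)).const_mul lam
    · exact (Finset.aestronglyMeasurable_fun_sum _ (fun t _ =>
        ((hWmeas t).mono (ℱ.le t)).aestronglyMeasurable)).const_mul (φ * σ2)
  have hGbd : ∀ ω, |G ω| ≤ Real.exp (lam * n) := by
    intro ω
    rw [hG, abs_of_nonneg (Real.exp_pos _).le]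
    apply Real.exp_le_exp.mpr
    have h1 : (∑ t ∈ Finset.range n, Z t ω) ≤ n := by
      calc (∑ t ∈ Finset.range n, Z t ω) ≤ ∑ t ∈ Finset.range n, (1:ℝ) :=
        Finset.sum_le_sum (fun t _ => le_trans (le_abs_self _) (hZbd t ω))
      _ = n := by simp
    have h2 : (0:ℝ) ≤ ∑ t ∈ Finset.range n, W t ω :=
      Finset.sum_nonneg (fun t _ => (hWbd t ω).1)
    nlinarith [mul_le_mul_of_nonneg_left h1 hlam0, mul_nonneg (mul_nonneg hφ0 hσ0) h2]
  have hGint : Integrable G μ := integrable_of_bound_all hGmeas _ hGbd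
  have hGtot : ∫ ω, G ω ∂μ ≤ 1 :=
    mgf_bound μ ℱ Z W σ2 hσ0 hZmeas hWmeas hZbd hWbd hcond1 hcond2 lam hlam0 n
  have hsub : {ω | Real.sqrt (2 * v * ρ) + ρ / 3 ≤ ∑ t ∈ Finset.range n, Z t ω
      ∧ σ2 * (∑ t ∈ Finset.range n, W t ω) ≤ v} ⊆ {ω | Real.exp ρ ≤ G ω} := by
    intro ω hω
    obtain ⟨h1, h2⟩ := hω
    have hexp : ρ ≤ lam * (∑ t ∈ Finset.range n, Z t ω)
        - φ * σ2 * (∑ t ∈ Finset.range n, W t ω) := by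
      have e1 : lam * (Real.sqrt (2 * v * ρ) + ρ / 3) ≤ lam * (∑ t ∈ Finset.range n, Z t ω) :=
        mul_le_mul_of_nonneg_left h1 hlam0
      have e2 : φ * (σ2 * (∑ t ∈ Finset.range n, W t ω)) ≤ φ * v :=
        mul_le_mul_of_nonneg_left h2 hφ0
      rw [hφ] at *
      nlinarith
    calc Real.exp ρ ≤ Real.exp (lam * (∑ t ∈ Finset.range n, Z t ω)
        - φ * σ2 * (∑ t ∈ Finset.range n, W t ω)) := Real.exp_le_exp.mpr hexp
    _ = G ω := rfl
  have hmarkov := mul_meas_ge_le_integral_of_nonneg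
    (ae_of_all μ (fun ω => (Real.exp_pos _).le : ∀ ω, (0:ℝ) ≤ G ω)) hGint (Real.exp ρ)
  have htoReal : (μ {ω | Real.exp ρ ≤ G ω}).toReal ≤ Real.exp (-ρ) := by
    have hpos := Real.exp_pos ρ
    have hchain : Real.exp ρ * (μ {ω | Real.exp ρ ≤ G ω}).toReal ≤ 1 := le_trans hmarkov hGtot
    rw [Real.exp_neg]
    have h2 := mul_le_mul_of_nonneg_left hchain (inv_pos.mpr hpos).le
    rw [← mul_assoc, inv_mul_cancel₀ (ne_of_gt hpos), one_mul, mul_one] at h2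
    exact h2
  calc μ {ω | Real.sqrt (2 * v * ρ) + ρ / 3 ≤ ∑ t ∈ Finset.range n, Z t ω
      ∧ σ2 * (∑ t ∈ Finset.range n, W t ω) ≤ v}
      ≤ μ {ω | Real.exp ρ ≤ G ω} := measure_mono hsub
    _ = ENNReal.ofReal ((μ {ω | Real.exp ρ ≤ G ω}).toReal) :=
        (ENNReal.ofReal_toReal (measure_ne_top μ _)).symm
    _ ≤ ENNReal.ofReal (Real.exp (-ρ)) := ENNReal.ofReal_le_ofReal htoReal

theorem bernstein_markov_transition_counts
    {Ω : Type*} {m0 : MeasurableSpace Ω} (μ : Measure Ω) [IsProbabilityMeasure μ]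
    (S : Type*) [Fintype S] [DecidableEq S] [MeasurableSpace S] [MeasurableSingletonClass S]
    (P : S → S → ℝ) (hP0 : ∀ a b, 0 ≤ P a b) (hP1 : ∀ a, ∑ b, P a b = 1)
    (ℱ : Filtration ℕ m0) (X : ℕ → Ω → S)
    (hadapt : ∀ t, Measurable[ℱ t] (X t))
    (hMarkov : ∀ (t : ℕ) (y : S),
      μ[(fun ω => if X (t + 1) ω = y then (1 : ℝ) else 0) | ℱ t]
        =ᵐ[μ] fun ω => P (X t ω) y)
    (n : ℕ) (hn : 2 ≤ n) (x y : S) (c δ : ℝ) (hc : 1 < c) (hδ : δ ∈ Set.Ioo (0 : ℝ) 1) :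
    (∀ t ω, |markovMDS X P x y t ω| ≤ 1) ∧
    (∀ t, μ[markovMDS X P x y t | ℱ t] =ᵐ[μ] 0) ∧
    (∀ t, μ[(fun ω => (markovMDS X P x y t ω) ^ 2) | ℱ t]
        =ᵐ[μ] fun ω => P x y * (1 - P x y) * (if X t ω = x then (1 : ℝ) else 0)) ∧
    μ {ω | ¬ (|transCount X x y n ω - visitCount X x n ω * P x y|
        ≤ Real.sqrt (2 * (P x y * (1 - P x y))
            * (c * Real.log ((⌈Real.log n / Real.log c⌉₊ : ℝ) * 2 / δ))
            * visitCount X x n ω)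
          + (c * Real.log ((⌈Real.log n / Real.log c⌉₊ : ℝ) * 2 / δ)) / 3)}
      ≤ ENNReal.ofReal δ := by
  classical
  obtain ⟨hδ0, hδ1⟩ := hδ
  set p := P x y with hp
  have hp0 : 0 ≤ p := hP0 x y
  have hp1 : p ≤ 1 := by
    have h1 : p ≤ ∑ b, P x b :=
      Finset.single_le_sum (fun b _ => hP0 x b) (Finset.mem_univ y)
    rw [hP1 x] at h1; exact h1
  set σ2 := p * (1 - p) with hσ2def
  have hσ0 : 0 ≤ σ2 := by nlinarith
  set W : ℕ → Ω → ℝ := fun t ω => if X t ω = x then (1:ℝ) else 0 with hWdef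
  set B : ℕ → Ω → ℝ := fun t ω => if X (t+1) ω = y then (1:ℝ) else 0 with hBdef
  set Z : ℕ → Ω → ℝ := markovMDS X P x y with hZdef
  -- measurability
  have hWmeas : ∀ t, StronglyMeasurable[ℱ t] (W t) := by
    intro t
    apply Measurable.stronglyMeasurable
    exact Measurable.ite (hadapt t (MeasurableSet.singleton x)) measurable_const measurable_const
  have hBmeas : ∀ t, StronglyMeasurable[ℱ (t+1)] (B t) := by
    intro t
    apply Measurable.stronglyMeasurable
    exact Measurable.ite (hadapt (t+1) (MeasurableSet.singleton y)) measurable_const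
      measurable_const
  have hZmeas : ∀ t, StronglyMeasurable[ℱ (t+1)] (Z t) := by
    intro t
    have : Z t = fun ω => W t ω * (B t ω - p) := rfl
    rw [this]
    exact (((hWmeas t).mono (ℱ.mono (Nat.le_succ t))).mul
      ((hBmeas t).sub stronglyMeasurable_const))
  -- bounds
  have hWval : ∀ t ω, W t ω = 0 ∨ W t ω = 1 := by
    intro t ω; by_cases h : X t ω = x <;> simp [hWdef, h]
  have hWbd : ∀ t ω, 0 ≤ W t ω ∧ W t ω ≤ 1 := by
    intro t ω; rcases hWval t ω with h | h <;> rw [h] <;> norm_num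
  have hZbd : ∀ t ω, |Z t ω| ≤ 1 := by
    intro t ω
    show |(if X t ω = x then (1:ℝ) else 0) * ((if X (t+1) ω = y then (1:ℝ) else 0) - p)| ≤ 1
    by_cases hx : X t ω = x <;> by_cases hy : X (t+1) ω = y <;>
      simp [hx, hy, abs_le] <;> constructor <;> linarith
  have hZW : ∀ t ω, |Z t ω| ≤ W t ω := by
    intro t ω
    show |(if X t ω = x then (1:ℝ) else 0) * ((if X (t+1) ω = y then (1:ℝ) else 0) - p)|
      ≤ (if X t ω = x then (1:ℝ) else 0)
    by_cases hx : X t ω = x <;> by_cases hy : X (t+1) ω = y <;>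
      simp [hx, hy, abs_le] <;> constructor <;> linarith
  -- integrability of B
  have hBint : ∀ t, Integrable (B t) μ := by
    intro t
    apply integrable_of_bound_all ((hBmeas t).mono (ℱ.le (t+1))).aestronglyMeasurable 1
    intro ω; by_cases hy : X (t+1) ω = y <;> simp [hBdef, hy]
  -- conditional expectation identities
  have hcond1 : ∀ t, μ[Z t | ℱ t] =ᵐ[μ] 0 := by
    intro t
    have hrepr : Z t = W t * (fun ω => B t ω - p) := rfl
    rw [hrepr]
    have hpull := condExp_stronglyMeasurable_mul_of_bound (ℱ.le t) (hWmeas t)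
      ((hBint t).sub (integrable_const p)) 1
      (ae_of_all _ (fun ω => by
        rcases hWval t ω with h | h <;> simp [Real.norm_eq_abs, h]))
    have hinner : μ[(B t - fun _ => p) | ℱ t] =ᵐ[μ] fun ω => P (X t ω) y - p := by
      refine (condExp_sub (hBint t) (integrable_const p) _).trans ?_
      have := hMarkov t y
      rw [condExp_const (ℱ.le t)]
      filter_upwards [this] with ω hω
      simp only [Pi.sub_apply]
      rw [hω]
    refine hpull.trans ?_
    filter_upwards [hinner] with ω hω
    simp only [Pi.mul_apply]
    rw [hω]
    show (if X t ω = x then (1:ℝ) else 0) * (P (X t ω) y - p) = 0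
    by_cases hx : X t ω = x <;> simp [hx, hp]
  have hcond2 : ∀ t, μ[(fun ω => Z t ω ^ 2) | ℱ t] =ᵐ[μ] fun ω => σ2 * W t ω := by
    intro t
    have hrepr : (fun ω => Z t ω ^ 2) = W t * (fun ω => (1 - 2*p) * B t ω + p^2) := by
      funext ω
      show ((if X t ω = x then (1:ℝ) else 0) * ((if X (t+1) ω = y then (1:ℝ) else 0) - p))^2
        = (if X t ω = x then (1:ℝ) else 0) * ((1-2*p) * (if X (t+1) ω = y then (1:ℝ) else 0) + p^2)
      by_cases hx : X t ω = x <;> by_cases hy : X (t+1) ω = y <;> simp [hx, hy] <;> ring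
    rw [hrepr]
    have hint : Integrable (fun ω => (1 - 2*p) * B t ω + p^2) μ := by
      refine integrable_of_bound_all
        (((hBint t).aestronglyMeasurable.const_mul _).add aestronglyMeasurable_const)
        (|1 - 2*p| + p^2) ?_
      intro ω
      have := abs_mul (1 - 2*p) (B t ω)
      have hb : |B t ω| ≤ 1 := by by_cases hy : X (t+1) ω = y <;> simp [hBdef, hy]
      calc |(1 - 2*p) * B t ω + p^2| ≤ |(1 - 2*p) * B t ω| + |p^2| := abs_add_le _ _
      _ ≤ |1 - 2*p| + p^2 := by
          rw [abs_mul, abs_of_nonneg (sq_nonneg p)]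
          have := abs_nonneg (1 - 2*p)
          nlinarith
    have hpull := condExp_stronglyMeasurable_mul_of_bound (ℱ.le t) (hWmeas t) hint 1
      (ae_of_all _ (fun ω => by
        rcases hWval t ω with h | h <;> simp [Real.norm_eq_abs, h]))
    have hinner : μ[(fun ω => (1 - 2*p) * B t ω + p^2) | ℱ t]
        =ᵐ[μ] fun ω => (1 - 2*p) * P (X t ω) y + p^2 := by
      have e0 : (fun ω => (1 - 2*p) * B t ω + p^2) = ((1 - 2*p) • B t) + (fun _ => p^2) := by
        funext ω; simp [Pi.smul_apply, smul_eq_mul]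
      rw [e0]
      refine (condExp_add ?_ (integrable_const _) _).trans ?_
      · exact ((hBint t).smul _)
      · rw [condExp_const (ℱ.le t)]
        have h1 := condExp_smul (μ := μ) (m := ℱ t) (1 - 2*p) (B t)
        filter_upwards [h1, hMarkov t y] with ω h1ω h2ω
        simp only [Pi.add_apply, Pi.smul_apply, smul_eq_mul] at *
        rw [h1ω, h2ω]
    refine hpull.trans ?_
    filter_upwards [hinner] with ω hω
    simp only [Pi.mul_apply]
    rw [hω]
    show (if X t ω = x then (1:ℝ) else 0) * ((1-2*p) * P (X t ω) y + p^2)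
      = σ2 * (if X t ω = x then (1:ℝ) else 0)
    by_cases hx : X t ω = x <;> simp [hx, hσ2def, hp] <;> ring
  refine ⟨hZbd, hcond1, hcond2, ?_⟩
  -- Part 4: peeled Bernstein bound
  set K := ⌈Real.log n / Real.log c⌉₊ with hKdef
  set ρ := Real.log ((K:ℝ) * 2 / δ) with hρdef
  have hc0 : (0:ℝ) < c := lt_trans one_pos hc
  have hn1 : (1:ℝ) < (n:ℝ) := by
    have h2n : (2:ℝ) ≤ (n:ℝ) := by exact_mod_cast hn
    linarith
  have hlogc : 0 < Real.log c := Real.log_pos hc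
  have hlogn : 0 < Real.log n := Real.log_pos hn1
  have hK1 : 1 ≤ K := Nat.one_le_ceil_iff.mpr (by positivity)
  have hKR : (1:ℝ) ≤ (K:ℝ) := by exact_mod_cast hK1
  have hρ0 : 0 < ρ := by
    apply Real.log_pos
    rw [lt_div_iff₀ hδ0]
    nlinarith
  have hζ0 : 0 < c * ρ := by positivity
  have hρζ : ρ ≤ c * ρ := by nlinarith
  have hcK : (n:ℝ) ≤ c ^ K := by
    have h1 : Real.log n / Real.log c ≤ (K:ℝ) := Nat.le_ceil _
    have h2 : Real.log n ≤ (K:ℝ) * Real.log c := by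
      rw [div_le_iff₀ hlogc] at h1; linarith
    calc (n:ℝ) = Real.exp (Real.log n) := (Real.exp_log (by positivity)).symm
    _ ≤ Real.exp ((K:ℝ) * Real.log c) := Real.exp_le_exp.mpr h2
    _ = c ^ K := by rw [Real.exp_nat_mul, Real.exp_log hc0]
  -- sums representation
  have hMrepr : ∀ ω, transCount X x y n ω - visitCount X x n ω * p
      = ∑ t ∈ Finset.range (n-1), Z t ω := by
    intro ω
    rw [transCount, visitCount, Finset.sum_mul, ← Finset.sum_sub_distrib]
    apply Finset.sum_congr rfl
    intro t _
    show (if X t ω = x ∧ X (t+1) ω = y then (1:ℝ) else 0)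
        - (if X t ω = x then (1:ℝ) else 0) * p
      = (if X t ω = x then (1:ℝ) else 0) * ((if X (t+1) ω = y then (1:ℝ) else 0) - p)
    by_cases hx : X t ω = x <;> by_cases hy : X (t+1) ω = y <;> simp [hx, hy]
  have hTrepr : ∀ ω, visitCount X x n ω = ∑ t ∈ Finset.range (n-1), W t ω := fun ω => rfl
  -- negated sequence
  set Z' : ℕ → Ω → ℝ := fun t ω => -(Z t ω) with hZ'def
  have hZ'meas : ∀ t, StronglyMeasurable[ℱ (t+1)] (Z' t) := fun t => (hZmeas t).neg
  have hZ'bd : ∀ t ω, |Z' t ω| ≤ 1 := by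
    intro t ω
    show |-(Z t ω)| ≤ 1
    rw [abs_neg]; exact hZbd t ω
  have hcond1' : ∀ t, μ[Z' t | ℱ t] =ᵐ[μ] 0 := by
    intro t
    have e : Z' t = -(Z t) := rfl
    rw [e]
    refine (condExp_neg _ _).trans ?_
    filter_upwards [hcond1 t] with ω hω
    simp only [Pi.neg_apply, Pi.zero_apply] at *
    rw [hω]; simp
  have hcond2' : ∀ t, μ[(fun ω => Z' t ω ^ 2) | ℱ t] =ᵐ[μ] fun ω => σ2 * W t ω := by
    intro t
    have e : (fun ω => Z' t ω ^ 2) = fun ω => Z t ω ^ 2 := by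
      funext ω; show (-(Z t ω))^2 = _; ring
    rw [e]; exact hcond2 t
  -- tail bounds at each level
  have htail : ∀ k : ℕ,
      μ {ω | Real.sqrt (2 * (σ2 * c^(k+1)) * ρ) + ρ/3 ≤ ∑ t ∈ Finset.range (n-1), Z t ω
          ∧ σ2 * (∑ t ∈ Finset.range (n-1), W t ω) ≤ σ2 * c^(k+1)}
        ≤ ENNReal.ofReal (Real.exp (-ρ)) := by
    intro k
    exact freedman_tail μ ℱ Z W σ2 hσ0 hZmeas hWmeas hZbd hWbd hcond1 hcond2 (n-1)
      (σ2 * c^(k+1)) ρ (by positivity) hρ0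
  have htail' : ∀ k : ℕ,
      μ {ω | Real.sqrt (2 * (σ2 * c^(k+1)) * ρ) + ρ/3 ≤ ∑ t ∈ Finset.range (n-1), Z' t ω
          ∧ σ2 * (∑ t ∈ Finset.range (n-1), W t ω) ≤ σ2 * c^(k+1)}
        ≤ ENNReal.ofReal (Real.exp (-ρ)) := by
    intro k
    exact freedman_tail μ ℱ Z' W σ2 hσ0 hZ'meas hWmeas hZ'bd hWbd hcond1' hcond2' (n-1)
      (σ2 * c^(k+1)) ρ (by positivity) hρ0
  -- inclusion into the union of level events
  have hsub : {ω | ¬ (|transCount X x y n ω - visitCount X x n ω * p|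
        ≤ Real.sqrt (2 * σ2 * (c * ρ) * visitCount X x n ω) + (c * ρ)/3)}
      ⊆ ⋃ k ∈ Finset.range K,
        ({ω | Real.sqrt (2 * (σ2 * c^(k+1)) * ρ) + ρ/3 ≤ ∑ t ∈ Finset.range (n-1), Z t ω
            ∧ σ2 * (∑ t ∈ Finset.range (n-1), W t ω) ≤ σ2 * c^(k+1)}
        ∪ {ω | Real.sqrt (2 * (σ2 * c^(k+1)) * ρ) + ρ/3 ≤ ∑ t ∈ Finset.range (n-1), Z' t ω
            ∧ σ2 * (∑ t ∈ Finset.range (n-1), W t ω) ≤ σ2 * c^(k+1)}) := by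
    intro ω hω
    simp only [Set.mem_setOf_eq, not_le] at hω
    rw [hMrepr ω, hTrepr ω] at hω
    set Mω := ∑ t ∈ Finset.range (n-1), Z t ω with hMω
    set Tω := ∑ t ∈ Finset.range (n-1), W t ω with hTω
    by_cases hT0 : ∀ t ∈ Finset.range (n-1), W t ω = 0
    · exfalso
      have hM0 : Mω = 0 := by
        rw [hMω]
        apply Finset.sum_eq_zero
        intro t ht
        have h1 := hZW t ω
        rw [hT0 t ht] at h1
        have := abs_nonneg (Z t ω)
        have : |Z t ω| = 0 := le_antisymm h1 this
        exact abs_eq_zero.mp this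
      have hT0' : Tω = 0 := Finset.sum_eq_zero hT0
      rw [hM0, hT0'] at hω
      have h1 : Real.sqrt (2 * σ2 * (c * ρ) * 0) = 0 := by
        rw [mul_zero, Real.sqrt_zero]
      rw [h1] at hω
      simp only [abs_zero] at hω
      nlinarith
    · push_neg at hT0
      obtain ⟨t0, ht0mem, ht0⟩ := hT0
      have hW1 : W t0 ω = 1 := by
        rcases hWval t0 ω with h | h
        · exact absurd h ht0
        · exact h
      have hT1 : (1:ℝ) ≤ Tω := by
        rw [hTω, ← hW1]
        exact Finset.single_le_sum (fun t _ => (hWbd t ω).1) ht0mem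
      have hTcK : Tω < c ^ K := by
        have h1 : Tω ≤ ((n-1:ℕ):ℝ) := by
          rw [hTω]
          calc ∑ t ∈ Finset.range (n-1), W t ω ≤ ∑ t ∈ Finset.range (n-1), (1:ℝ) :=
            Finset.sum_le_sum (fun t _ => (hWbd t ω).2)
          _ = ((n-1:ℕ):ℝ) := by simp
        have h2 : ((n-1:ℕ):ℝ) < (n:ℝ) := by
          have : n - 1 < n := by omega
          exact_mod_cast this
        linarith
      have h0mem : 0 ∈ (Finset.range (K+1)).filter (fun j => c^j ≤ Tω) := by
        simp only [Finset.mem_filter, Finset.mem_range, pow_zero]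
        exact ⟨by omega, hT1⟩
      set SS := (Finset.range (K+1)).filter (fun j => c^j ≤ Tω) with hSSdef
      have hne : SS.Nonempty := ⟨0, h0mem⟩
      set k := SS.max' hne with hkdef
      have hkmem : k ∈ (Finset.range (K+1)).filter (fun j => c^j ≤ Tω) := SS.max'_mem hne
      rw [Finset.mem_filter, Finset.mem_range] at hkmem
      obtain ⟨hkK1, hck⟩ := hkmem
      have hkK : k < K := by
        by_contra hcon
        have hkeq : k = K := by omega
        rw [hkeq] at hck
        linarith
      have hck1 : Tω ≤ c^(k+1) := by
        by_contra hcon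
        push_neg at hcon
        have hmem : k + 1 ∈ SS := by
          show k + 1 ∈ (Finset.range (K+1)).filter (fun j => c^j ≤ Tω)
          rw [Finset.mem_filter, Finset.mem_range]
          exact ⟨by omega, hcon.le⟩
        have := Finset.le_max' SS (k+1) hmem
        omega
      have hbnd : Real.sqrt (2 * (σ2 * c^(k+1)) * ρ) + ρ/3
          ≤ Real.sqrt (2 * σ2 * (c * ρ) * Tω) + (c * ρ)/3 := by
        have e2 : 2 * (σ2 * c^(k+1)) * ρ ≤ 2 * σ2 * (c * ρ) * Tω := by
          have e1 : 2 * (σ2 * c^(k+1)) * ρ = 2 * σ2 * (c * ρ) * c^k := by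
            rw [pow_succ]; ring
          rw [e1]
          apply mul_le_mul_of_nonneg_left hck (by positivity)
        have e3 := Real.sqrt_le_sqrt e2
        linarith [hρζ]
      have hvk : σ2 * Tω ≤ σ2 * c^(k+1) := mul_le_mul_of_nonneg_left hck1 hσ0
      apply Set.mem_biUnion (Finset.mem_coe.mpr (Finset.mem_range.mpr hkK))
      rcases abs_cases Mω with ⟨habs, _⟩ | ⟨habs, _⟩
      · left
        refine ⟨?_, hvk⟩
        linarith [hbnd, hω, habs]
      · right
        refine ⟨?_, hvk⟩
        have hsum : ∑ t ∈ Finset.range (n-1), Z' t ω = -Mω := by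
          rw [hMω, ← Finset.sum_neg_distrib]
        linarith [hbnd, hω, habs, hsum]
  -- measure computation
  have hexpρ : Real.exp (-ρ) = δ / ((K:ℝ) * 2) := by
    rw [hρdef, Real.exp_neg, Real.exp_log (by positivity), inv_div]
  calc μ {ω | ¬ (|transCount X x y n ω - visitCount X x n ω * p|
        ≤ Real.sqrt (2 * σ2 * (c * ρ) * visitCount X x n ω) + (c * ρ)/3)}
      ≤ μ (⋃ k ∈ Finset.range K,
        ({ω | Real.sqrt (2 * (σ2 * c^(k+1)) * ρ) + ρ/3 ≤ ∑ t ∈ Finset.range (n-1), Z t ω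
            ∧ σ2 * (∑ t ∈ Finset.range (n-1), W t ω) ≤ σ2 * c^(k+1)}
        ∪ {ω | Real.sqrt (2 * (σ2 * c^(k+1)) * ρ) + ρ/3 ≤ ∑ t ∈ Finset.range (n-1), Z' t ω
            ∧ σ2 * (∑ t ∈ Finset.range (n-1), W t ω) ≤ σ2 * c^(k+1)})) := measure_mono hsub
    _ ≤ ∑ k ∈ Finset.range K,
        μ ({ω | Real.sqrt (2 * (σ2 * c^(k+1)) * ρ) + ρ/3 ≤ ∑ t ∈ Finset.range (n-1), Z t ω
            ∧ σ2 * (∑ t ∈ Finset.range (n-1), W t ω) ≤ σ2 * c^(k+1)}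
        ∪ {ω | Real.sqrt (2 * (σ2 * c^(k+1)) * ρ) + ρ/3 ≤ ∑ t ∈ Finset.range (n-1), Z' t ω
            ∧ σ2 * (∑ t ∈ Finset.range (n-1), W t ω) ≤ σ2 * c^(k+1)}) :=
        measure_biUnion_finset_le _ _
    _ ≤ ∑ _k ∈ Finset.range K,
        (ENNReal.ofReal (Real.exp (-ρ)) + ENNReal.ofReal (Real.exp (-ρ))) := by
        apply Finset.sum_le_sum
        intro k _
        exact le_trans (measure_union_le _ _) (add_le_add (htail k) (htail' k))
    _ ≤ ENNReal.ofReal δ := by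
        rw [Finset.sum_const, Finset.card_range, hexpρ,
          ← ENNReal.ofReal_add (by positivity) (by positivity), nsmul_eq_mul,
          ← ENNReal.ofReal_natCast K, ← ENNReal.ofReal_mul (Nat.cast_nonneg K)]
        apply ENNReal.ofReal_le_ofReal
        have hKne : (K:ℝ) ≠ 0 := by positivity
        apply le_of_eq
        field_simp
        ring
end
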